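/- If soc(A) is a cyclic R-module, then A has the extension property with respect to the symmetrized weight composition swc_G for every subgroup G of Aut_R(A). -/

import Mathlib

variable {R A : Type*} [Ring R] [AddCommGroup A] [Module R A]

/-- The orbit of `a₀ ∈ A` under a subgroup `G ≤ Aut_R(A)`; the orbits in `A/G` are
exactly the sets `orbitG G a₀` for `a₀ : A`. -/
def orbitG (G : Subgroup (A ≃ₗ[R] A)) (a₀ : A) : Set A :=
  {b | ∃ g ∈ G, (g : A ≃ₗ[R] A) a₀ = b}

/-- The symmetrized weight composition built on `G`: `swcG G a a₀` is the number of
coordinates of `a ∈ A^n` lying in the orbit of `a₀`. -/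
noncomputable def swcG (G : Subgroup (A ≃ₗ[R] A)) {n : ℕ} (a : Fin n → A) (a₀ : A) : ℚ :=
  Nat.card {i : Fin n // a i ∈ orbitG G a₀}

/-- Membership in the closure `Ḡ` of `G`: `g` maps every `G`-orbit onto itself. -/
def inClosure (G : Subgroup (A ≃ₗ[R] A)) (g : A ≃ₗ[R] A) : Prop :=
  ∀ a₀ : A, (g : A ≃ₗ[R] A) '' orbitG G a₀ = orbitG G a₀

/-- A map `h : A^n → A^n` is `G`-monomial if there are a permutation `π` and
automorphisms `g₁, …, g_n` in the closure `Ḡ` with `h(a)_i = g_i (a_{π i})`. -/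
def IsGMonomial (G : Subgroup (A ≃ₗ[R] A)) {n : ℕ} (h : (Fin n → A) → (Fin n → A)) : Prop :=
  ∃ (π : Equiv.Perm (Fin n)) (g : Fin n → (A ≃ₗ[R] A)),
    (∀ i, inClosure G (g i)) ∧ ∀ (a : Fin n → A) (i : Fin n), h a i = (g i) (a (π i))

/-- The socle of a module: the sum of all simple submodules, i.e. the supremum of the
atoms of the submodule lattice. -/
def socle (R A : Type*) [Ring R] [AddCommGroup A] [Module R A] : Submodule R A :=
  sSup {S : Submodule R A | IsAtom S}

/-- `A` has the extension property with respect to `swc_G`: for every length `n`,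
every linear code `C ⊆ A^n` and every `swc_G`-isometry `f : C → A^n`, the map `f`
extends to a `G`-monomial map of `A^n`. -/
def HasExtensionProperty (R : Type*) (A : Type*) [Ring R] [AddCommGroup A] [Module R A]
    (G : Subgroup (A ≃ₗ[R] A)) : Prop :=
  ∀ n : ℕ, 0 < n → ∀ (C : Submodule R (Fin n → A)) (f : C →ₗ[R] (Fin n → A)),
    (∀ (c : C) (a₀ : A), swcG G (f c : Fin n → A) a₀ = swcG G (c : Fin n → A) a₀) →
    ∃ h : (Fin n → A) → (Fin n → A),
      IsGMonomial G h ∧ ∀ c : C, h (c : Fin n → A) = f c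

/-!
A character `χ : A → ℂ` is generating if its kernel contains no nonzero submodule. If `soc A` is
cyclic, such a character exists: the socle is a product, over the isomorphism types `W` of its
simple constituents, of cyclic modules `W ^ k`; such a factor has fewer than `|W|` atoms, each
killed by a fraction `1 / |W|` of the characters, so some character of the factor kills no atom.
The product of these characters is generating on the socle, and any extension of it to `A` is
generating on `A`.

Given an `swc_G`-isometry `f : C → A ^ n`, let `ℓ i, ℓ' i : C → A` be the coordinates of the
inclusion and of `f`. As `x ↦ ∑ g ∈ G, χ (g x)` is constant on `G`-orbits, the equality of the
`swc_G` gives `∑ i, ∑ g, χ ∘ g ∘ ℓ' i = ∑ i, ∑ g, χ ∘ g ∘ ℓ i` as functions on `C`. Characters of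
`C` are linearly independent and `l ↦ χ ∘ l` is injective, so every `G`-orbit in `Hom(C, A)`
contains as many `ℓ i` as `ℓ' i`; matching them gives `π` and `g i ∈ G` with
`ℓ' i = g i ∘ ℓ (π i)`, a `G`-monomial extension of `f`.
-/

open Function Finset

namespace AddChar

variable {B M : Type*} [AddCommGroup B] [AddCommGroup M]

def dualMap {N : Type*} [CommMonoid N] (f : B →+ M) : AddChar M N →+ AddChar B N where
  toFun ψ := ψ.compAddMonoidHom f
  map_zero' := rfl
  map_add' _ _ := rfl

@[simp] lemma dualMap_apply {N : Type*} [CommMonoid N] (f : B →+ M) (ψ : AddChar M N) (b : B) :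
    dualMap f ψ b = ψ (f b) := rfl

lemma natCard_eq [Finite M] : Nat.card (AddChar M ℂ) = Nat.card M := by
  have := Fintype.ofFinite M
  rw [Nat.card_eq_fintype_card, card_eq, Nat.card_eq_fintype_card]

/-- By Pontryagin duality, a character of the cokernel of `dualMap f` would be evaluation at a
nonzero element of `B` that every character of `M` kills. -/
theorem dualMap_surjective [Finite M] {f : B →+ M} (hf : Injective f) :
    Surjective (dualMap (N := ℂ) f) := by
  have : Finite B := Finite.of_injective f hf
  intro η
  by_contra hη
  obtain ⟨φ, hφ⟩ := exists_apply_ne_zero.mpr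
    ((QuotientAddGroup.eq_zero_iff (N := (dualMap (N := ℂ) f).range) η).not.mpr hη)
  set Φ := φ.compAddMonoidHom (QuotientAddGroup.mk' (dualMap (N := ℂ) f).range)
  have hΦ : doubleDualEquiv.symm Φ = 0 := by
    refine hf ((forall_apply_eq_zero.mp fun χ => ?_).trans f.map_zero.symm)
    rw [← dualMap_apply, ← doubleDualEmb_apply, doubleDualEmb_doubleDualEquiv_symm_apply]
    simp [Φ, (QuotientAddGroup.eq_zero_iff _).mpr (AddMonoidHom.mem_range.mpr ⟨χ, rfl⟩)]
  apply hφ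
  have := congrArg (fun b => doubleDualEmb b η) hΦ
  simpa [Φ] using this

theorem card_ker_dualMap_mul [Finite M] {f : B →+ M} (hf : Injective f) :
    Nat.card (dualMap (N := ℂ) f).ker * Nat.card B = Nat.card M := by
  have : Finite B := Finite.of_injective f hf
  rw [← natCard_eq (M := B), ← natCard_eq (M := M),
    AddSubgroup.card_eq_card_quotient_mul_card_addSubgroup (dualMap (N := ℂ) f).ker, mul_comm,
    Nat.card_congr
      (QuotientAddGroup.quotientKerEquivOfSurjective _ (dualMap_surjective hf)).toEquiv]

variable [Module R B] [Module R M]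

variable (R) in
def submoduleKer (ψ : AddChar M ℂ) : Submodule R M where
  carrier := {x | ∀ r : R, ψ (r • x) = 1}
  add_mem' hx hy r := by rw [smul_add, map_add_eq_mul, hx r, hy r, one_mul]
  zero_mem' r := by rw [smul_zero, map_zero_eq_one]
  smul_mem' s x hx r := by rw [smul_smul]; exact hx (r * s)

lemma mem_submoduleKer {ψ : AddChar M ℂ} {x : M} :
    x ∈ submoduleKer R ψ ↔ ∀ r : R, ψ (r • x) = 1 := Iff.rfl

lemma le_submoduleKer_iff {ψ : AddChar M ℂ} {P : Submodule R M} :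
    P ≤ submoduleKer R ψ ↔ ∀ x ∈ P, ψ x = 1 :=
  ⟨fun h x hx => by simpa using h hx 1, fun h x hx r => h _ (P.smul_mem r hx)⟩

lemma submoduleKer_eq_bot_iff [IsAtomic (Submodule R M)] {ψ : AddChar M ℂ} :
    submoduleKer R ψ = ⊥ ↔ ∀ P : Submodule R M, IsAtom P → ∃ x ∈ P, ψ x ≠ 1 := by
  refine ⟨fun h P hP => ?_, fun h => ?_⟩
  · by_contra! hP1
    exact hP.1 (eq_bot_iff.mpr (h ▸ le_submoduleKer_iff.mpr hP1))
  · refine (eq_bot_or_exists_atom_le _).resolve_right fun ⟨P, hP, hle⟩ => ?_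
    obtain ⟨x, hx, hx1⟩ := h P hP
    exact hx1 (le_submoduleKer_iff.mp hle x hx)

lemma submoduleKer_compAddMonoidHom (ψ : AddChar M ℂ) (f : B →ₗ[R] M) :
    submoduleKer R (ψ.compAddMonoidHom f.toAddMonoidHom) = (submoduleKer R ψ).comap f := by
  ext b
  simp [mem_submoduleKer]

theorem compAddMonoidHom_injective_of_submoduleKer_eq_bot {ψ : AddChar M ℂ}
    (hψ : submoduleKer R ψ = ⊥) :
    Injective fun l : B →ₗ[R] M => ψ.compAddMonoidHom l.toAddMonoidHom := by
  intro l l' h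
  ext b
  rw [← sub_eq_zero, ← Submodule.mem_bot R, ← hψ]
  intro r
  have := DFunLike.congr_fun h (r • b)
  simp only [compAddMonoidHom_apply, LinearMap.toAddMonoidHom_coe] at this
  rw [smul_sub, ← map_smul, ← map_smul, map_sub_eq_div, this, div_self (ψ.val_isUnit _).ne_zero]

end AddChar

section GeneratingChar

variable {M : Type*} [AddCommGroup M] [Module R M]

variable (R M) in
def HasGeneratingChar : Prop := ∃ ψ : AddChar M ℂ, AddChar.submoduleKer R ψ = ⊥

theorem HasGeneratingChar.of_linearEquiv {N : Type*} [AddCommGroup N] [Module R N]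
    (e : M ≃ₗ[R] N) (h : HasGeneratingChar R N) : HasGeneratingChar R M := by
  obtain ⟨ψ, hψ⟩ := h
  refine ⟨ψ.compAddMonoidHom (e : M →ₗ[R] N).toAddMonoidHom, ?_⟩
  rw [AddChar.submoduleKer_compAddMonoidHom, hψ, Submodule.comap_bot, LinearEquiv.ker]

theorem HasGeneratingChar.of_le [Finite M] {N : Submodule R M}
    (hN : ∀ P : Submodule R M, IsAtom P → P ≤ N) (h : HasGeneratingChar R N) :
    HasGeneratingChar R M := by
  obtain ⟨ψ, hψ⟩ := h
  obtain ⟨χ, rfl⟩ := AddChar.dualMap_surjective (f := N.subtype.toAddMonoidHom)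
    Subtype.val_injective ψ
  refine ⟨χ, (eq_bot_or_exists_atom_le _).resolve_right fun ⟨P, hP, hle⟩ => hP.1 ?_⟩
  have : P.comap N.subtype = ⊥ := eq_bot_iff.mpr <|
    (Submodule.comap_mono hle).trans (AddChar.submoduleKer_compAddMonoidHom χ N.subtype ▸ hψ).le
  rw [← inf_eq_right.mpr (hN P hP), ← Submodule.map_comap_subtype, this, Submodule.map_bot]

theorem hasGeneratingChar_of_card_atoms_lt [Finite M] (t : ℕ)
    (hcard : ∀ P : Submodule R M, IsAtom P → Nat.card P = t)
    (hlt : Nat.card {P : Submodule R M // IsAtom P} < t) : HasGeneratingChar R M := by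
  classical
  have := Fintype.ofFinite M
  have := Fintype.ofFinite (Submodule R M)
  let trivialOn (P : Submodule R M) : Finset (AddChar M ℂ) := {ψ | ∀ x ∈ P, ψ x = 1}
  have hcard_trivialOn (P : Submodule R M) (hP : IsAtom P) :
      #(trivialOn P) * t = Nat.card M := by
    rw [← hcard P hP, ← AddChar.card_ker_dualMap_mul (f := P.subtype.toAddMonoidHom)
      Subtype.val_injective, ← Nat.card_eq_finsetCard]
    congr 1
    exact Nat.card_congr <| Equiv.subtypeEquivRight fun ψ => by
      simp [trivialOn, AddChar.eq_zero_iff]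
  let atoms : Finset (Submodule R M) := {P | IsAtom P}
  have hatoms : #atoms = Nat.card {P : Submodule R M // IsAtom P} := by
    rw [Nat.card_eq_fintype_card, Fintype.card_subtype]
  have hbad : #(atoms.biUnion trivialOn) < Nat.card M := by
    refine Nat.lt_of_mul_lt_mul_right (a := t) ?_
    calc #(atoms.biUnion trivialOn) * t ≤ (∑ P ∈ atoms, #(trivialOn P)) * t :=
          Nat.mul_le_mul_right _ card_biUnion_le
      _ = #atoms * Nat.card M := by
          rw [sum_mul, sum_congr rfl fun P hP => hcard_trivialOn P (by simpa [atoms] using hP),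
            sum_const, smul_eq_mul]
      _ < Nat.card M * t := by
          rw [hatoms, mul_comm]
          exact Nat.mul_lt_mul_of_pos_left hlt Nat.card_pos
  obtain ⟨ψ, -, hψ⟩ := Finset.exists_mem_notMem_of_card_lt_card (t := Finset.univ)
    (hbad.trans_eq (by rw [← AddChar.natCard_eq, Nat.card_eq_fintype_card, ← Finset.card_univ]))
  refine ⟨ψ, AddChar.submoduleKer_eq_bot_iff.mpr fun P hP => ?_⟩
  by_contra! h
  exact hψ (mem_biUnion.mpr ⟨P, by simpa [atoms] using hP, by simpa [trivialOn] using h⟩)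

theorem nonempty_linearEquiv_of_isAtom {W : Type*} [AddCommGroup W] [Module R W]
    [IsSimpleModule R W] {P : Submodule R M} (hP : IsAtom P) (f : M →ₗ[R] W) {x : M}
    (hx : x ∈ P) (hfx : f x ≠ 0) : Nonempty (P ≃ₗ[R] W) := by
  have := isSimpleModule_iff_isAtom.mpr hP
  refine ⟨.ofBijective (f ∘ₗ P.subtype) (LinearMap.bijective_of_ne_zero fun h => hfx ?_)⟩
  simpa using LinearMap.congr_fun h ⟨x, hx⟩

theorem natCard_linearMap_le_of_isPrincipal [Module.IsPrincipal R M] {N : Type*}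
    [AddCommGroup N] [Module R N] [Finite N] : Nat.card (M →ₗ[R] N) ≤ Nat.card N := by
  obtain ⟨m, hm⟩ := Submodule.IsPrincipal.principal (⊤ : Submodule R M)
  refine Nat.card_le_card_of_injective (fun f => f m) fun f g hfg => ?_
  exact LinearMap.ext_on hm.symm (by simpa using hfg)

theorem hasGeneratingChar_pi_const {ι W : Type*} [Fintype ι] [AddCommGroup W] [Module R W]
    [IsSimpleModule R W] [Finite W] [Module.IsPrincipal R (ι → W)] :
    HasGeneratingChar R (ι → W) := by
  classical
  have atom_equiv (P : Submodule R (ι → W)) (hP : IsAtom P) : Nonempty (P ≃ₗ[R] W) := by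
    obtain ⟨x, hx, hx0⟩ := Submodule.ne_bot_iff P |>.mp hP.1
    obtain ⟨i, hi⟩ := Function.ne_iff.mp hx0
    exact nonempty_linearEquiv_of_isAtom hP (LinearMap.proj i) hx hi
  refine hasGeneratingChar_of_card_atoms_lt (Nat.card W)
    (fun P hP => Nat.card_congr (atom_equiv P hP).some.toEquiv) ?_
  -- atoms are images of distinct nonzero maps `W → ι → W`, and there are
  -- `|End W| ^ |ι| = |Hom(ι → W, W)| ≤ |W|` such maps since `ι → W` is cyclic
  let embed (P : {P : Submodule R (ι → W) // IsAtom P}) : W →ₗ[R] ι → W :=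
    P.1.subtype ∘ₗ (atom_equiv P.1 P.2).some.symm.toLinearMap
  have range_embed (P) : LinearMap.range (embed P) = P.1 := by
    simp [embed, LinearMap.range_comp, LinearEquiv.range]
  have := Fintype.ofFinite {P : Submodule R (ι → W) // IsAtom P}
  have : Finite (W →ₗ[R] ι → W) := .of_injective _ DFunLike.coe_injective
  have := Fintype.ofFinite (W →ₗ[R] ι → W)
  calc Nat.card {P : Submodule R (ι → W) // IsAtom P} < Nat.card (W →ₗ[R] ι → W) := by
        rw [Nat.card_eq_fintype_card, Nat.card_eq_fintype_card]
        refine Fintype.card_lt_of_injective_of_notMem embed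
          (fun P Q h => Subtype.ext ((range_embed P).symm.trans (h ▸ range_embed Q))) (b := 0) ?_
        rintro ⟨P, hP⟩
        exact P.2.1 (by rw [← range_embed P, hP, LinearMap.range_zero])
    _ = Nat.card ((ι → W) →ₗ[R] W) :=
        (Nat.card_congr (LinearEquiv.linearMapPi (R := R) (φ := fun _ => W) ℕ).toEquiv).symm.trans
          (Nat.card_congr (LinearMap.lsum R (fun _ => W) ℕ).toEquiv)
    _ ≤ Nat.card W := natCard_linearMap_le_of_isPrincipal

theorem hasGeneratingChar_pi {Q : Type*} [Fintype Q] {M : Q → Type*} [∀ q, AddCommGroup (M q)]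
    [∀ q, Module R (M q)] [∀ q, Finite (M q)]
    (hsupp : ∀ P : Submodule R (∀ q, M q), IsAtom P → ∃ q, ∀ x ∈ P, ∀ q' ≠ q, x q' = 0)
    (h : ∀ q, HasGeneratingChar R (M q)) : HasGeneratingChar R (∀ q, M q) := by
  classical
  choose ψ hψ using h
  refine ⟨∏ q, (ψ q).compAddMonoidHom (Pi.evalAddMonoidHom M q),
    AddChar.submoduleKer_eq_bot_iff.mpr fun P hP => ?_⟩
  obtain ⟨q, hq⟩ := hsupp P hP
  obtain ⟨x, hx, hx0⟩ := Submodule.ne_bot_iff P |>.mp hP.1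
  have hxq : x q ∉ AddChar.submoduleKer R (ψ q) := by
    rw [hψ q, Submodule.mem_bot]
    exact fun h => hx0 (funext fun q' => if e : q' = q then e ▸ h else hq x hx q' e)
  obtain ⟨r, hr⟩ := not_forall.mp hxq
  refine ⟨r • x, P.smul_mem r hx, ?_⟩
  rwa [AddChar.prod_apply, prod_eq_single q (fun q' _ e => by simp [hq _ (P.smul_mem r hx) q' e])
    (fun h => absurd (mem_univ q) h)]

theorem hasGeneratingChar_pi_isotypic {Q : Type*} [Fintype Q] {ι : Q → Type*} [∀ q, Fintype (ι q)]
    {W : Q → Type*} [∀ q, AddCommGroup (W q)] [∀ q, Module R (W q)]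
    [∀ q, IsSimpleModule R (W q)] [∀ q, Finite (W q)]
    (hW : ∀ q q', Nonempty (W q ≃ₗ[R] W q') → q = q')
    [Module.IsPrincipal R (∀ q, ι q → W q)] : HasGeneratingChar R (∀ q, ι q → W q) := by
  refine hasGeneratingChar_pi (fun P hP => ?_) fun q => ?_
  · have equiv_of_ne {x} (hx : x ∈ P) {q} (h : x q ≠ 0) : Nonempty (P ≃ₗ[R] W q) := by
      obtain ⟨j, hj⟩ := Function.ne_iff.mp h
      exact nonempty_linearEquiv_of_isAtom hP (LinearMap.proj j ∘ₗ LinearMap.proj q) hx hj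
    obtain ⟨x, hx, hx0⟩ := Submodule.ne_bot_iff P |>.mp hP.1
    obtain ⟨q, hq⟩ := Function.ne_iff.mp hx0
    refine ⟨q, fun y hy q' hq' => by_contra fun h => hq' (hW q' q ?_)⟩
    exact ⟨(equiv_of_ne hy h).some.symm.trans (equiv_of_ne hx hq).some⟩
  · have : Module.IsPrincipal R (ι q → W q) :=
      .of_surjective (LinearMap.proj q : (∀ q, ι q → W q) →ₗ[R] ι q → W q)
        (LinearMap.proj_surjective q)
    exact hasGeneratingChar_pi_const

theorem hasGeneratingChar_pi_of_isSimpleModule {ι : Type*} [Fintype ι] {T : ι → Type*}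
    [∀ i, AddCommGroup (T i)] [∀ i, Module R (T i)] [∀ i, IsSimpleModule R (T i)]
    [∀ i, Finite (T i)] [Module.IsPrincipal R (∀ i, T i)] : HasGeneratingChar R (∀ i, T i) := by
  classical
  let iso : Setoid ι := ⟨fun i j => Nonempty (T i ≃ₗ[R] T j),
    ⟨fun i => ⟨.refl R _⟩, fun ⟨e⟩ => ⟨e.symm⟩, fun ⟨e⟩ ⟨f⟩ => ⟨e.trans f⟩⟩⟩
  let cls : ι → Quotient iso := Quotient.mk iso
  have equiv_out (q : Quotient iso) (i : {i // cls i = q}) : Nonempty (T i ≃ₗ[R] T q.out) :=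
    Quotient.exact (i.2.trans q.out_eq.symm)
  let e : (∀ i, T i) ≃ₗ[R] ∀ q : Quotient iso, {i // cls i = q} → T q.out :=
    (LinearEquiv.piCongrLeft R T (Equiv.sigmaFiberEquiv cls)).symm ≪≫ₗ
      LinearEquiv.piCurry R (fun q (i : {i // cls i = q}) => T i) ≪≫ₗ
      LinearEquiv.piCongrRight fun q => LinearEquiv.piCongrRight fun i => (equiv_out q i).some
  have : Module.IsPrincipal R (∀ q : Quotient iso, {i // cls i = q} → T q.out) :=
    .of_surjective e.toLinearMap e.surjective
  exact .of_linearEquiv e (hasGeneratingChar_pi_isotypic fun q q' h => Quotient.out_equiv_out.mp h)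

theorem hasGeneratingChar_of_isSemisimpleModule [Finite M] [IsSemisimpleModule R M]
    [Module.IsPrincipal R M] : HasGeneratingChar R M := by
  obtain ⟨s, e, -, hs⟩ := IsSemisimpleModule.exists_linearEquiv_dfinsupp R M
  have := Fintype.ofFinite s
  let e' := e ≪≫ₗ DFinsupp.linearEquivFunOnFintype
  have : Module.IsPrincipal R (∀ m : s, m.1) := .of_surjective e'.toLinearMap e'.surjective
  exact .of_linearEquiv e' hasGeneratingChar_pi_of_isSimpleModule

theorem hasGeneratingChar_of_socle_isPrincipal [Finite M] (h : (socle R M).IsPrincipal) :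
    HasGeneratingChar R M := by
  have : IsSemisimpleModule R (socle R M) := by
    rw [socle, sSup_eq_iSup (s := {P : Submodule R M | IsAtom P})]
    exact isSemisimpleModule_biSup_of_isSemisimpleModule_submodule fun P hP =>
      have := isSimpleModule_iff_isAtom.mpr hP; inferInstance
  have : Module.IsPrincipal R (socle R M) := Module.isPrincipal_submodule_iff.mpr h
  exact .of_le (N := socle R M) (fun P hP => le_sSup hP) hasGeneratingChar_of_isSemisimpleModule

end GeneratingChar

theorem orbitG_eq_orbit (G : Subgroup (A ≃ₗ[R] A)) (a₀ : A) :
    orbitG G a₀ = MulAction.orbit G a₀ := by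
  ext b
  exact ⟨fun ⟨g, hg, h⟩ => ⟨⟨g, hg⟩, h⟩, fun ⟨g, h⟩ => ⟨g, g.2, h⟩⟩

theorem inClosure_of_mem {G : Subgroup (A ≃ₗ[R] A)} {g : A ≃ₗ[R] A} (hg : g ∈ G) :
    inClosure G g := fun a₀ => by
  rw [orbitG_eq_orbit]
  exact Set.image_smul.trans (MulAction.smul_orbit (⟨g, hg⟩ : G) a₀)

theorem exists_perm_of_card_filter_eq {ι β : Type*} [Fintype ι] [DecidableEq β] {u v : ι → β}
    (h : ∀ b, #{i | u i = b} = #{i | v i = b}) : ∃ σ : Equiv.Perm ι, ∀ i, u (σ i) = v i := by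
  have e (b : β) : {i // v i = b} ≃ {i // u i = b} :=
    Fintype.equivOfCardEq (by rw [Fintype.card_subtype, Fintype.card_subtype, h])
  exact ⟨(Equiv.sigmaFiberEquiv v).symm.trans
    ((Equiv.sigmaCongrRight e).trans (Equiv.sigmaFiberEquiv u)), fun i => (e (v i) ⟨i, rfl⟩).2⟩

theorem LinearIndependent.card_filter_eq_of_sum_eq {K V κ P β : Type*} [Ring K] [CharZero K]
    [AddCommGroup V] [Module K V] {v : κ → V} (hv : LinearIndependent K v) [Fintype P]
    {F₁ F₂ : P → κ} (h : ∑ p, v (F₁ p) = ∑ p, v (F₂ p)) [DecidableEq β] (φ : κ → β) (b : β) :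
    #{p | φ (F₁ p) = b} = #{p | φ (F₂ p) = b} := by
  classical
  have h1 : ∑ p, Finsupp.single (F₁ p) (1 : K) = ∑ p, Finsupp.single (F₂ p) 1 :=
    hv (by simpa [map_sum, Finsupp.linearCombination_single] using h)
  have h2 := congrArg (fun f => Finsupp.mapDomain φ f b) h1
  simp only [Finsupp.mapDomain_finsetSum, Finsupp.mapDomain_single, Finsupp.finsetSum_apply,
    Finsupp.single_apply, sum_boole] at h2
  exact_mod_cast h2

theorem exists_perm_mem_orbit_of_swcG_eq {G : Subgroup (A ≃ₗ[R] A)} {n : ℕ} {a b : Fin n → A}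
    (h : ∀ a₀, swcG G a a₀ = swcG G b a₀) :
    ∃ σ : Equiv.Perm (Fin n), ∀ i, a (σ i) ∈ MulAction.orbit G (b i) := by
  classical
  have hcount (O : MulAction.orbitRel.Quotient G A) :
      #{i | ⟦a i⟧ = O} = #{i | ⟦b i⟧ = O} := by
    induction O using Quotient.inductionOn with | h x => ?_
    have hx := h x
    simp only [swcG, orbitG_eq_orbit, Nat.card_eq_fintype_card, Fintype.card_subtype,
      Nat.cast_inj] at hx
    simpa only [Quotient.eq, MulAction.orbitRel_apply] using hx
  obtain ⟨σ, hσ⟩ := exists_perm_of_card_filter_eq hcount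
  exact ⟨σ, fun i => Quotient.exact (hσ i)⟩

theorem sum_eq_of_swcG_eq {G : Subgroup (A ≃ₗ[R] A)} {β : Type*} [AddCommMonoid β] {Φ : A → β}
    (hΦ : ∀ (g : G) (x : A), Φ (g • x) = Φ x) {n : ℕ} {a b : Fin n → A}
    (h : ∀ a₀, swcG G a a₀ = swcG G b a₀) : ∑ i, Φ (a i) = ∑ i, Φ (b i) := by
  obtain ⟨σ, hσ⟩ := exists_perm_mem_orbit_of_swcG_eq h
  rw [← Equiv.sum_comp σ]
  refine sum_congr rfl fun i _ => ?_
  obtain ⟨g, hg⟩ := hσ i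
  rw [← hg, hΦ]

theorem exists_perm_smul_eq_of_swcG_eq [Finite A] (hA : HasGeneratingChar R A)
    (G : Subgroup (A ≃ₗ[R] A)) {C : Type*} [AddCommGroup C] [Module R C] [Finite C] {n : ℕ}
    (ℓ ℓ' : Fin n → C →ₗ[R] A)
    (h : ∀ c a₀, swcG G (fun i => ℓ' i c) a₀ = swcG G (fun i => ℓ i c) a₀) :
    ∃ π : Equiv.Perm (Fin n), ∀ i, ∃ g : G, g • ℓ (π i) = ℓ' i := by
  classical
  obtain ⟨χ, hχ⟩ := hA
  have : Finite (A ≃ₗ[R] A) := .of_injective _ DFunLike.coe_injective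
  have := Fintype.ofFinite G
  let v (l : C →ₗ[R] A) : C → ℂ := χ.compAddMonoidHom l.toAddMonoidHom
  have hv : LinearIndependent ℂ v := (AddChar.linearIndependent C ℂ).comp _
    (AddChar.compAddMonoidHom_injective_of_submoduleKer_eq_bot hχ)
  have hsum : ∑ p : Fin n × G, v (p.2 • ℓ' p.1) = ∑ p : Fin n × G, v (p.2 • ℓ p.1) := by
    ext c
    simp only [Finset.sum_apply, Fintype.sum_prod_type]
    refine sum_eq_of_swcG_eq (Φ := fun x => ∑ g : G, χ (g • x)) (fun g x => ?_) (h c)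
    simp only [smul_smul]
    exact Equiv.sum_comp (Equiv.mulRight g) fun g' => χ (g' • x)
  have hcount (O : MulAction.orbitRel.Quotient G (C →ₗ[R] A)) :
      #{i | ⟦ℓ i⟧ = O} = #{i | ⟦ℓ' i⟧ = O} := by
    have hmk (g : G) (l : C →ₗ[R] A) : (⟦g • l⟧ : MulAction.orbitRel.Quotient G _) = ⟦l⟧ :=
      Quotient.sound (MulAction.orbitRel_apply.mpr (MulAction.mem_orbit l g))
    have := hv.card_filter_eq_of_sum_eq hsum (Quotient.mk _) O
    simp only [hmk, ← univ_product_univ, filter_product_left (fun i => ⟦_⟧ = O), card_product]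
      at this
    exact (Nat.eq_of_mul_eq_mul_right (card_pos.mpr univ_nonempty) this).symm
  obtain ⟨π, hπ⟩ := exists_perm_of_card_filter_eq hcount
  exact ⟨π, fun i => Quotient.exact (hπ i).symm⟩

theorem hasExtensionProperty_of_socle_cyclic_general [Finite A]
    (hcyc : ∃ a : A, socle R A = Submodule.span R {a}) :
    ∀ G : Subgroup (A ≃ₗ[R] A), HasExtensionProperty R A G := by
  intro G n _ C f hf
  obtain ⟨π, hπ⟩ := exists_perm_smul_eq_of_swcG_eq
    (hasGeneratingChar_of_socle_isPrincipal ⟨hcyc⟩) G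
    (fun i => LinearMap.proj i ∘ₗ C.subtype) (fun i => LinearMap.proj i ∘ₗ f) fun c => hf c
  choose g hg using hπ
  refine ⟨fun a i => (g i : A ≃ₗ[R] A) (a (π i)),
    ⟨π, fun i => g i, fun i => inClosure_of_mem (g i).2, fun _ _ => rfl⟩, fun c => ?_⟩
  funext i
  exact LinearMap.congr_fun (hg i) c

/-- If `soc(A)` is a cyclic `R`-module, then `A` has the extension property with
respect to the symmetrized weight composition `swc_G` for every subgroup
`G ≤ Aut_R(A)`. -/
theorem hasExtensionProperty_of_socle_cyclic [Finite R] [Finite A]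
    (hcyc : ∃ a : A, socle R A = Submodule.span R {a}) :
    ∀ G : Subgroup (A ≃ₗ[R] A), HasExtensionProperty R A G :=
  hasExtensionProperty_of_socle_cyclic_general hcyc
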